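/- arXiv:2405.10064 — 15 statements merged into one kernel-verified Lean document; each statement's English description precedes it below -/
import Mathlib

section
/- Let X1 ∈ ℝ^{n×N} and Z0 ∈ ℝ^{s×N} be real matrices and define F_att^data := {F ∈ ℝ^{n×s} : im [F; I_s] ⊆ im [X1; Z0]}, where [F; I_s] and [X1; Z0] denote vertically stacked block matrices. Then F_att^data is nonempty if and only if Z0 has full row rank (i.e. rank Z0 = s). Moreover, when Z0 has full row rank, X1·Z0⁺ ∈ F_att^data for any right inverse Z0⁺ of Z0. -/
open Matrix

/-- Column space of a matrix: the range of the linear map `x ↦ M x`. -/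
def imCol {p q : Type*} [Fintype q] (M : Matrix p q ℝ) : Submodule ℝ (p → ℝ) :=
  LinearMap.range M.mulVecLin

lemma rank_eq_iff_surj (s N : ℕ) (Z0 : Matrix (Fin s) (Fin N) ℝ) :
    Z0.rank = s ↔ Function.Surjective Z0.mulVecLin := by
  rw [← LinearMap.range_eq_top]
  constructor
  · intro h
    apply Submodule.eq_top_of_finrank_eq
    simpa [Matrix.rank] using h
  · intro h
    rw [Matrix.rank, h]
    simp

/-- The set `F_att^data = {F : im [F; I_s] ⊆ im [X1; Z0]}` is nonempty iff `Z0` has full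
row rank; moreover, in that case `X1 · Z0⁺ ∈ F_att^data` for any right inverse `Z0⁺` of `Z0`. -/
theorem stmt0 (n s N : ℕ)
    (X1 : Matrix (Fin n) (Fin N) ℝ) (Z0 : Matrix (Fin s) (Fin N) ℝ) :
    ((∃ F : Matrix (Fin n) (Fin s) ℝ,
        imCol (Matrix.fromRows F (1 : Matrix (Fin s) (Fin s) ℝ)) ≤
          imCol (Matrix.fromRows X1 Z0)) ↔ Z0.rank = s) ∧
    (Z0.rank = s →
      ∀ Zp : Matrix (Fin N) (Fin s) ℝ, Z0 * Zp = 1 →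
        imCol (Matrix.fromRows (X1 * Zp) (1 : Matrix (Fin s) (Fin s) ℝ)) ≤
          imCol (Matrix.fromRows X1 Z0)) := by
  have key : ∀ Zp : Matrix (Fin N) (Fin s) ℝ, Z0 * Zp = 1 →
      imCol (Matrix.fromRows (X1 * Zp) (1 : Matrix (Fin s) (Fin s) ℝ)) ≤
        imCol (Matrix.fromRows X1 Z0) := by
    intro Zp hZp x hx
    obtain ⟨v, hv⟩ := hx
    refine ⟨Zp *ᵥ v, ?_⟩
    simp only [mulVecLin_apply] at hv ⊢
    rw [fromRows_mulVec] at hv ⊢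
    rw [mulVec_mulVec, mulVec_mulVec, hZp]
    exact hv
  constructor
  · constructor
    · rintro ⟨F, hF⟩
      rw [rank_eq_iff_surj]
      intro y
      have hy : Sum.elim (F *ᵥ y) y ∈
          imCol (Matrix.fromRows F (1 : Matrix (Fin s) (Fin s) ℝ)) := by
        refine ⟨y, ?_⟩
        simp [fromRows_mulVec]
      obtain ⟨x, hx⟩ := hF hy
      refine ⟨x, ?_⟩
      simp only [mulVecLin_apply, fromRows_mulVec] at hx
      have := congrFun hx
      ext j
      simpa using this (Sum.inr j)
    · intro h
      obtain ⟨g, hg⟩ := Function.Surjective.hasRightInverse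
        ((rank_eq_iff_surj s N Z0).mp h)
      set Zp : Matrix (Fin N) (Fin s) ℝ :=
        Matrix.of fun k i => g (Pi.single i 1) k with hZpdef
      have hZp : Z0 * Zp = 1 := by
        ext j i
        have h1 := hg (Pi.single i 1)
        have h2 : (Z0 *ᵥ g (Pi.single i 1)) j = (Pi.single i 1 : Fin s → ℝ) j := by
          rw [show Z0 *ᵥ g (Pi.single i 1) = Z0.mulVecLin (g (Pi.single i 1)) from rfl, h1]
        calc (Z0 * Zp) j i = (Z0 *ᵥ g (Pi.single i 1)) j := by
              simp [mul_apply, mulVec, dotProduct, hZpdef]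
          _ = (1 : Matrix (Fin s) (Fin s) ℝ) j i := by
              rw [h2]
              simp [Pi.single_apply, Matrix.one_apply, eq_comm]
      exact ⟨X1 * Zp, key Zp hZp⟩
  · intro _
    exact key
end

section
/- Suppose X1 = A·Z0 + B·U0. Then F_att^data ⊆ F_att^model; that is, every F ∈ ℝ^{n×s} with im [F; I_s] ⊆ im [X1; Z0] satisfies im (A − F) ⊆ im B. -/
open Matrix

/-- If `X1 = A Z0 + B U0`, then `F_att^data ⊆ F_att^model`: every `F` with
`im [F; I_s] ⊆ im [X1; Z0]` satisfies `im (A - F) ⊆ im B`. -/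
theorem stmt1 (n m s N : ℕ)
    (A : Matrix (Fin n) (Fin s) ℝ) (B : Matrix (Fin n) (Fin m) ℝ)
    (X1 : Matrix (Fin n) (Fin N) ℝ) (Z0 : Matrix (Fin s) (Fin N) ℝ)
    (U0 : Matrix (Fin m) (Fin N) ℝ)
    (hdata : X1 = A * Z0 + B * U0) :
    ∀ F : Matrix (Fin n) (Fin s) ℝ,
      imCol (Matrix.fromRows F (1 : Matrix (Fin s) (Fin s) ℝ)) ≤
        imCol (Matrix.fromRows X1 Z0) →
      imCol (A - F) ≤ imCol B := by
  intro F h y hy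
  obtain ⟨x, rfl⟩ := hy
  have hx : Sum.elim (F.mulVec x) x ∈ imCol (Matrix.fromRows X1 Z0) := by
    apply h
    exact ⟨x, by simp [mulVecLin_apply, fromRows_mulVec]⟩
  obtain ⟨w, hw⟩ := hx
  rw [mulVecLin_apply, fromRows_mulVec] at hw
  have h1 : X1.mulVec w = F.mulVec x := funext fun i => congrFun hw (Sum.inl i)
  have h2 : Z0.mulVec w = x := funext fun i => congrFun hw (Sum.inr i)
  refine ⟨-(U0.mulVec w), ?_⟩
  have : (A - F).mulVec x = A.mulVec (Z0.mulVec w) - X1.mulVec w := by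
    rw [h2, h1, sub_mulVec]
  symm
  rw [mulVecLin_apply, this, hdata, add_mulVec, ← mulVec_mulVec, ← mulVec_mulVec]
  simp [mulVec_neg]
end

section
/- Suppose X1 = A·Z0 + B·U0, B has full column rank, and m ≤ s. Then F_att^data = F_att^model if and only if the stacked data matrix [Z0; U0] ∈ ℝ^{(s+m)×N} has full row rank. -/
open Matrix

/-- `F_att^data = {F : im [F; I_s] ⊆ im [X1; Z0]}`. -/
def FattData (n s N : ℕ) (X1 : Matrix (Fin n) (Fin N) ℝ) (Z0 : Matrix (Fin s) (Fin N) ℝ) :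
    Set (Matrix (Fin n) (Fin s) ℝ) :=
  {F | imCol (Matrix.fromRows F (1 : Matrix (Fin s) (Fin s) ℝ)) ≤
        imCol (Matrix.fromRows X1 Z0)}

/-- `F_att^model = {F : im (A - F) ⊆ im B}`. -/
def FattModel (n m s : ℕ) (A : Matrix (Fin n) (Fin s) ℝ) (B : Matrix (Fin n) (Fin m) ℝ) :
    Set (Matrix (Fin n) (Fin s) ℝ) :=
  {F | imCol (A - F) ≤ imCol B}

lemma mem_imCol {p q : Type*} [Fintype q] {M : Matrix p q ℝ} {v : p → ℝ} :
    v ∈ imCol M ↔ ∃ x, M *ᵥ x = v := Iff.rfl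

/-- A rectangular matrix has rank equal to its number of rows iff its
column space is everything. -/
lemma rank_eq_card_rows_iff {p q : Type*} [Fintype p] [Fintype q] {M : Matrix p q ℝ} :
    M.rank = Fintype.card p ↔ LinearMap.range M.mulVecLin = ⊤ := by
  constructor
  · intro h
    apply Submodule.eq_top_of_finrank_eq
    rw [Module.finrank_fintype_fun_eq_card]
    exact h
  · intro h
    rw [Matrix.rank, h, finrank_top, Module.finrank_fintype_fun_eq_card]

/-- If `X1 = A Z0 + B U0`, `B` has full column rank and `m ≤ s`, then
`F_att^data = F_att^model` iff `[Z0; U0]` has full row rank. -/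
theorem stmt2 (n m s N : ℕ) (hms : m ≤ s)
    (A : Matrix (Fin n) (Fin s) ℝ) (B : Matrix (Fin n) (Fin m) ℝ)
    (X1 : Matrix (Fin n) (Fin N) ℝ) (Z0 : Matrix (Fin s) (Fin N) ℝ)
    (U0 : Matrix (Fin m) (Fin N) ℝ)
    (hdata : X1 = A * Z0 + B * U0)
    (hB : B.rank = m) :
    FattData n s N X1 Z0 = FattModel n m s A B ↔
      (Matrix.fromRows Z0 U0).rank = s + m := by
  -- `B` is injective as a linear map
  have hBinj : Function.Injective B.mulVecLin := by
    rw [← LinearMap.ker_eq_bot]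
    have h1 := LinearMap.finrank_range_add_finrank_ker B.mulVecLin
    rw [Matrix.rank] at hB
    rw [hB, Module.finrank_fintype_fun_eq_card, Fintype.card_fin] at h1
    have : Module.finrank ℝ (LinearMap.ker B.mulVecLin) = 0 := by omega
    exact Submodule.finrank_eq_zero.mp this
  have hcard : Fintype.card (Fin s ⊕ Fin m) = s + m := by simp
  rw [show (s + m) = Fintype.card (Fin s ⊕ Fin m) from hcard.symm,
    rank_eq_card_rows_iff]
  constructor
  · -- equality of the two sets forces full row rank
    intro heq
    -- key claim: each `Sum.elim (Pi.single j 1) u` is in the column space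
    have key : ∀ (j : Fin s) (u : Fin m → ℝ),
        Sum.elim (Pi.single j 1 : Fin s → ℝ) u ∈
          LinearMap.range (Matrix.fromRows Z0 U0).mulVecLin := by
      intro j u
      set C : Matrix (Fin m) (Fin s) ℝ :=
        Matrix.of (fun i k => if k = j then -(u i) else 0) with hC
      have hCe : C *ᵥ (Pi.single j 1 : Fin s → ℝ) = -u := by
        funext i
        simp [hC, Matrix.mulVec, dotProduct, Pi.single_apply]
      set F : Matrix (Fin n) (Fin s) ℝ := A - B * C with hF
      have hFmodel : F ∈ FattModel n m s A B := by
        intro v hv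
        obtain ⟨y, hy⟩ := hv
        refine ⟨C *ᵥ y, ?_⟩
        simpa [hF, Matrix.mulVecLin_apply, Matrix.mulVec_mulVec] using hy
      have hFdata : F ∈ FattData n s N X1 Z0 := heq ▸ hFmodel
      have hmem : Matrix.fromRows F (1 : Matrix (Fin s) (Fin s) ℝ) *ᵥ
          (Pi.single j 1) ∈ imCol (Matrix.fromRows F 1) := ⟨Pi.single j 1, rfl⟩
      obtain ⟨x, hx⟩ := hFdata hmem
      rw [Matrix.mulVecLin_apply, Matrix.fromRows_mulVec, Matrix.fromRows_mulVec] at hx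
      have hx1 : X1 *ᵥ x = F *ᵥ (Pi.single j 1) := funext fun i => congrFun hx (Sum.inl i)
      have hx2 : Z0 *ᵥ x = Pi.single j 1 := by
        have h2 : Z0 *ᵥ x = (1 : Matrix (Fin s) (Fin s) ℝ) *ᵥ Pi.single j 1 :=
          funext fun i => congrFun hx (Sum.inr i)
        rwa [Matrix.one_mulVec] at h2
      -- deduce `U0 *ᵥ x = u` using injectivity of `B`
      have hBu : B *ᵥ (U0 *ᵥ x) = B *ᵥ u := by
        have h3 : A *ᵥ (Pi.single j 1) + B *ᵥ (U0 *ᵥ x)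
            = A *ᵥ (Pi.single j 1) + B *ᵥ u := by
          calc A *ᵥ (Pi.single j 1) + B *ᵥ (U0 *ᵥ x)
              = A *ᵥ (Z0 *ᵥ x) + B *ᵥ (U0 *ᵥ x) := by rw [hx2]
            _ = X1 *ᵥ x := by
                rw [hdata, Matrix.add_mulVec, Matrix.mulVec_mulVec, Matrix.mulVec_mulVec]
            _ = F *ᵥ (Pi.single j 1) := hx1
            _ = A *ᵥ (Pi.single j 1) - B *ᵥ (C *ᵥ (Pi.single j 1)) := by
                rw [hF, Matrix.sub_mulVec, Matrix.mulVec_mulVec]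
            _ = A *ᵥ (Pi.single j 1) + B *ᵥ u := by
                rw [hCe, Matrix.mulVec_neg, sub_neg_eq_add]
        exact add_left_cancel h3
      have hU : U0 *ᵥ x = u := hBinj (by simpa [Matrix.mulVecLin_apply] using hBu)
      exact ⟨x, by simp [Matrix.mulVecLin_apply, hx2, hU]⟩
    -- now show the range is everything
    rcases Nat.eq_zero_or_pos s with hs | hs
    · -- then `m = 0` too, and the target module is trivial
      have hm : m = 0 := le_antisymm (hs ▸ hms) (Nat.zero_le m)
      subst hs; subst hm
      rw [eq_top_iff]
      intro v _
      have : v = 0 := funext fun i => by cases i with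
        | inl a => exact a.elim0
        | inr a => exact a.elim0
      rw [this]; exact Submodule.zero_mem _
    · -- standard basis vectors are all in the range
      rw [eq_top_iff, ← (Pi.basisFun ℝ (Fin s ⊕ Fin m)).span_eq, Submodule.span_le]
      rintro _ ⟨i, rfl⟩
      rw [Pi.basisFun_apply]
      cases i with
      | inl j =>
        have := key j 0
        have heq2 : Sum.elim (Pi.single j 1 : Fin s → ℝ) (0 : Fin m → ℝ)
            = Pi.single (Sum.inl j) 1 := by
          funext i; cases i <;> simp [Pi.single_apply]
        rwa [heq2] at this
      | inr k =>
        set j0 : Fin s := ⟨0, hs⟩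
        have h1 := key j0 (Pi.single k 1)
        have h2 := key j0 0
        have hsub := Submodule.sub_mem _ h1 h2
        have heq2 : Sum.elim (Pi.single j0 1 : Fin s → ℝ) (Pi.single k 1)
            - Sum.elim (Pi.single j0 1 : Fin s → ℝ) 0 = Pi.single (Sum.inr k) 1 := by
          funext i; cases i <;> simp [Pi.single_apply]
        rwa [heq2] at hsub
  · -- full row rank gives equality of the two sets
    intro hsurj
    ext F
    constructor
    · -- data ⊆ model (always true)
      intro hF v hv
      obtain ⟨y, hy⟩ := hv
      rw [Matrix.mulVecLin_apply, Matrix.sub_mulVec] at hy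
      have hmem : Matrix.fromRows F (1 : Matrix (Fin s) (Fin s) ℝ) *ᵥ y
          ∈ imCol (Matrix.fromRows F 1) := ⟨y, rfl⟩
      obtain ⟨x, hx⟩ := hF hmem
      rw [Matrix.mulVecLin_apply, Matrix.fromRows_mulVec, Matrix.fromRows_mulVec] at hx
      have hx1 : X1 *ᵥ x = F *ᵥ y := funext fun i => congrFun hx (Sum.inl i)
      have hx2 : Z0 *ᵥ x = y := by
        have h2 : Z0 *ᵥ x = (1 : Matrix (Fin s) (Fin s) ℝ) *ᵥ y :=
          funext fun i => congrFun hx (Sum.inr i)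
        rwa [Matrix.one_mulVec] at h2
      refine ⟨-(U0 *ᵥ x), ?_⟩
      rw [Matrix.mulVecLin_apply, Matrix.mulVec_neg, ← hy]
      have : A *ᵥ (Z0 *ᵥ x) + B *ᵥ (U0 *ᵥ x) = F *ᵥ y := by
        rw [Matrix.mulVec_mulVec, Matrix.mulVec_mulVec, ← Matrix.add_mulVec, ← hdata, hx1]
      rw [hx2] at this
      rw [← this]; abel
    · -- model ⊆ data (uses surjectivity)
      intro hF w hw
      obtain ⟨y, hy⟩ := hw
      rw [Matrix.mulVecLin_apply, Matrix.fromRows_mulVec] at hy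
      have hmem : (A - F) *ᵥ (-y) ∈ imCol (A - F) := ⟨-y, rfl⟩
      obtain ⟨u, hu⟩ := hF hmem
      rw [Matrix.mulVecLin_apply] at hu
      have hBu : B *ᵥ u = F *ᵥ y - A *ᵥ y := by
        rw [hu, Matrix.sub_mulVec, Matrix.mulVec_neg, Matrix.mulVec_neg]
        abel
      have : Sum.elim y u ∈ LinearMap.range (Matrix.fromRows Z0 U0).mulVecLin := by
        rw [hsurj]; trivial
      obtain ⟨x, hx⟩ := this
      rw [Matrix.mulVecLin_apply, Matrix.fromRows_mulVec] at hx
      have hx1 : Z0 *ᵥ x = y := funext fun i => congrFun hx (Sum.inl i)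
      have hx2 : U0 *ᵥ x = u := funext fun i => congrFun hx (Sum.inr i)
      refine ⟨x, ?_⟩
      rw [Matrix.mulVecLin_apply, Matrix.fromRows_mulVec, ← hy]
      have hX : X1 *ᵥ x = F *ᵥ y := by
        rw [hdata, Matrix.add_mulVec, ← Matrix.mulVec_mulVec, ← Matrix.mulVec_mulVec,
          hx1, hx2, hBu]
        abel
      rw [hX, hx1, Matrix.one_mulVec]
end

section
/- For any F ∈ ℝ^{n×s}, the inclusion im (A − F) ⊆ im B holds if and only if im [F; I_s] ⊆ im of the block matrix [[A, B], [I_s, 0]] ∈ ℝ^{(n+s)×(s+m)}. Consequently, F_att^model = {F ∈ ℝ^{n×s} : im [F; I_s] ⊆ im [[A, B], [I_s, 0]]}. -/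
open Matrix

/-- `im (A - F) ⊆ im B` iff `im [F; I_s] ⊆ im [[A, B], [I_s, 0]]`; hence
`F_att^model = {F : im [F; I_s] ⊆ im [[A, B], [I_s, 0]]}`. -/
theorem stmt3 (n m s : ℕ)
    (A : Matrix (Fin n) (Fin s) ℝ) (B : Matrix (Fin n) (Fin m) ℝ) :
    (∀ F : Matrix (Fin n) (Fin s) ℝ,
      imCol (A - F) ≤ imCol B ↔
        imCol (Matrix.fromRows F (1 : Matrix (Fin s) (Fin s) ℝ)) ≤
          imCol (Matrix.fromBlocks A B (1 : Matrix (Fin s) (Fin s) ℝ)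
            (0 : Matrix (Fin s) (Fin m) ℝ))) ∧
    {F : Matrix (Fin n) (Fin s) ℝ | imCol (A - F) ≤ imCol B} =
      {F : Matrix (Fin n) (Fin s) ℝ |
        imCol (Matrix.fromRows F (1 : Matrix (Fin s) (Fin s) ℝ)) ≤
          imCol (Matrix.fromBlocks A B (1 : Matrix (Fin s) (Fin s) ℝ)
            (0 : Matrix (Fin s) (Fin m) ℝ))} := by
  have key : ∀ F : Matrix (Fin n) (Fin s) ℝ,
      imCol (A - F) ≤ imCol B ↔
        imCol (Matrix.fromRows F (1 : Matrix (Fin s) (Fin s) ℝ)) ≤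
          imCol (Matrix.fromBlocks A B (1 : Matrix (Fin s) (Fin s) ℝ)
            (0 : Matrix (Fin s) (Fin m) ℝ)) := by
    intro F
    constructor
    · intro h x hx
      obtain ⟨y, rfl⟩ := hx
      obtain ⟨w, hw⟩ := h (⟨y, rfl⟩ : (A - F) *ᵥ y ∈ imCol (A - F))
      refine ⟨Sum.elim y (-w), ?_⟩
      simp only [mulVecLin_apply, fromBlocks_mulVec, fromRows_mulVec]
      have h1 : Sum.elim y (-w) ∘ Sum.inl = y := rfl
      have h2 : Sum.elim y (-w) ∘ Sum.inr = -w := rfl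
      rw [h1, h2]
      have hw' : B *ᵥ w = A *ᵥ y - F *ᵥ y := by
        simpa [Matrix.sub_mulVec] using hw
      have e1 : A *ᵥ y + B *ᵥ (-w) = F *ᵥ y := by
        rw [Matrix.mulVec_neg, hw']; abel
      have e2 : (1 : Matrix (Fin s) (Fin s) ℝ) *ᵥ y + (0 : Matrix (Fin s) (Fin m) ℝ) *ᵥ (-w)
          = (1 : Matrix (Fin s) (Fin s) ℝ) *ᵥ y := by simp
      rw [e1, e2]
    · intro h x hx
      obtain ⟨y, rfl⟩ := hx
      obtain ⟨z, hz⟩ := h (⟨y, rfl⟩ : _ ∈ imCol (Matrix.fromRows F 1))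
      simp only [mulVecLin_apply, fromBlocks_mulVec, fromRows_mulVec,
        Matrix.one_mulVec, Matrix.zero_mulVec, add_zero] at hz
      have h1 : A *ᵥ (z ∘ Sum.inl) + B *ᵥ (z ∘ Sum.inr) = F *ᵥ y :=
        funext fun i => congrFun hz (Sum.inl i)
      have h2 : z ∘ Sum.inl = y :=
        funext fun i => congrFun hz (Sum.inr i)
      refine ⟨-(z ∘ Sum.inr), ?_⟩
      simp only [mulVecLin_apply, Matrix.sub_mulVec, Matrix.mulVec_neg]
      rw [h2] at h1
      rw [← h1]
      abel
  exact ⟨key, Set.ext fun F => key F⟩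
end

section
/- Suppose X1 = A·Z0 + B·U0 and B has full column rank. Then im [X1; Z0] = im [[A, B], [I_s, 0]] if and only if the stacked data matrix [Z0; U0] ∈ ℝ^{(s+m)×N} has full row rank. -/
/-!
The consistency equation factors the data as `[X1; Z0] = F * [Z0; U0]` with
`F = [[A, B], [I, 0]]`, and `F` is injective because `B` is. Hence `im (F W) = F '' (im W)`
equals `im F` exactly when `im W` is the whole space, i.e. when `W = [Z0; U0]` has full row rank.
-/

open Matrix

namespace Matrix

variable {l m n : Type*} [Fintype m] [Fintype n]

section Field

variable {K : Type*} [Field K]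

theorem mulVec_injective_of_rank_eq_card_width {B : Matrix l n K}
    (hB : B.rank = Fintype.card n) : Function.Injective B.mulVec := by
  have hnullity := LinearMap.finrank_range_add_finrank_ker B.mulVecLin
  rw [← Matrix.rank, hB, Module.finrank_fintype_fun_eq_card, Nat.add_eq_left,
    Submodule.finrank_eq_zero] at hnullity
  exact LinearMap.ker_eq_bot.1 hnullity

theorem range_mulVecLin_eq_top_iff_rank_eq_card_height {W : Matrix m n K} :
    LinearMap.range W.mulVecLin = ⊤ ↔ W.rank = Fintype.card m := by
  rw [Matrix.rank, ← Module.finrank_fintype_fun_eq_card (R := K)]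
  exact ⟨fun h ↦ h ▸ finrank_top K (m → K), Submodule.eq_top_of_finrank_eq⟩

theorem range_mulVecLin_mul_eq_range_iff [Fintype l] {F : Matrix l m K} {W : Matrix m n K}
    (hF : Function.Injective F.mulVec) :
    LinearMap.range (F * W).mulVecLin = LinearMap.range F.mulVecLin ↔
      LinearMap.range W.mulVecLin = ⊤ := by
  rw [mulVecLin_mul, LinearMap.range_comp, ← Submodule.map_top F.mulVecLin]
  exact (Submodule.map_injective_of_injective hF).eq_iff

end Field

section Ring

variable {R : Type*} [Ring R] [DecidableEq m]

theorem mulVec_fromBlocks_one_zero_injective (A : Matrix l m R) {B : Matrix l n R}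
    (hB : Function.Injective B.mulVec) :
    Function.Injective (fromBlocks A B (1 : Matrix m m R) 0).mulVec := by
  intro v w hvw
  rw [fromBlocks_mulVec, fromBlocks_mulVec, Sum.elim_eq_iff] at hvw
  obtain ⟨htop, hbottom⟩ := hvw
  simp only [one_mulVec, zero_mulVec, add_zero] at hbottom
  rw [hbottom, add_left_cancel_iff] at htop
  exact funext (Sum.rec (congrFun hbottom) (congrFun (hB htop)))

end Ring

end Matrix

/-- If `X1 = A Z0 + B U0` and `B` has full column rank, then
`im [X1; Z0] = im [[A, B], [I_s, 0]]` iff `[Z0; U0]` has full row rank. -/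
theorem stmt4 (n m s N : ℕ)
    (A : Matrix (Fin n) (Fin s) ℝ) (B : Matrix (Fin n) (Fin m) ℝ)
    (X1 : Matrix (Fin n) (Fin N) ℝ) (Z0 : Matrix (Fin s) (Fin N) ℝ)
    (U0 : Matrix (Fin m) (Fin N) ℝ)
    (hdata : X1 = A * Z0 + B * U0)
    (hB : B.rank = m) :
    imCol (Matrix.fromRows X1 Z0) =
      imCol (Matrix.fromBlocks A B (1 : Matrix (Fin s) (Fin s) ℝ)
        (0 : Matrix (Fin s) (Fin m) ℝ)) ↔
      (Matrix.fromRows Z0 U0).rank = s + m := by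
  have hfactor : fromRows X1 Z0 = fromBlocks A B 1 0 * fromRows Z0 U0 := by
    rw [fromBlocks_mul_fromRows, Matrix.one_mul, Matrix.zero_mul, add_zero, hdata]
  have hBinj : Function.Injective B.mulVec :=
    mulVec_injective_of_rank_eq_card_width (by rwa [Fintype.card_fin])
  rw [imCol, imCol, hfactor,
    range_mulVecLin_mul_eq_range_iff (mulVec_fromBlocks_one_zero_injective A hBinj),
    range_mulVecLin_eq_top_iff_rank_eq_card_height, Fintype.card_sum, Fintype.card_fin,
    Fintype.card_fin]
end

section
/- Suppose X1 = A·Z0 + B·U0 and m ≤ s. If F_att^model ⊆ F_att^data, then im [[A, B], [I_s, 0]] ⊆ im [X1; Z0] (and hence, combined with the consistency equation, im [X1; Z0] = im [[A, B], [I_s, 0]]). -/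
open Matrix

/-- If `X1 = A Z0 + B U0`, `m ≤ s` and `F_att^model ⊆ F_att^data`, then
`im [[A, B], [I_s, 0]] ⊆ im [X1; Z0]`, and hence the two images are equal. -/
theorem stmt5 (n m s N : ℕ) (hms : m ≤ s)
    (A : Matrix (Fin n) (Fin s) ℝ) (B : Matrix (Fin n) (Fin m) ℝ)
    (X1 : Matrix (Fin n) (Fin N) ℝ) (Z0 : Matrix (Fin s) (Fin N) ℝ)
    (U0 : Matrix (Fin m) (Fin N) ℝ)
    (hdata : X1 = A * Z0 + B * U0)
    (hsub : FattModel n m s A B ⊆ FattData n s N X1 Z0) :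
    imCol (Matrix.fromBlocks A B (1 : Matrix (Fin s) (Fin s) ℝ)
        (0 : Matrix (Fin s) (Fin m) ℝ)) ≤ imCol (Matrix.fromRows X1 Z0) ∧
    imCol (Matrix.fromRows X1 Z0) =
      imCol (Matrix.fromBlocks A B (1 : Matrix (Fin s) (Fin s) ℝ)
        (0 : Matrix (Fin s) (Fin m) ℝ)) := by
  classical
  set S := imCol (Matrix.fromRows X1 Z0) with hS
  have key : ∀ F ∈ FattModel n m s A B, ∀ z : Fin s → ℝ,
      Sum.elim (F *ᵥ z) z ∈ S := by
    intro F hF z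
    have h := hsub hF
    have hmem : Sum.elim (F *ᵥ z) z ∈
        imCol (Matrix.fromRows F (1 : Matrix (Fin s) (Fin s) ℝ)) := by
      refine ⟨z, ?_⟩
      simp [Matrix.mulVecLin_apply, Matrix.fromRows_mulVec]
    exact h hmem
  -- The matrix E with E i j = [j = i]
  set E : Matrix (Fin m) (Fin s) ℝ :=
    fun i j => if (j : ℕ) = (i : ℕ) then 1 else 0 with hE
  have hAmem : A ∈ FattModel n m s A B := by
    intro v hv
    obtain ⟨x, hx⟩ := hv
    refine ⟨0, ?_⟩
    simp [← hx, Matrix.mulVecLin_apply]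
  have hFmem : A - B * E ∈ FattModel n m s A B := by
    intro v hv
    obtain ⟨x, hx⟩ := hv
    refine ⟨E *ᵥ x, ?_⟩
    simp only [Matrix.mulVecLin_apply] at hx ⊢
    rw [← hx]
    simp [Matrix.mulVec_mulVec]
  have hEz : ∀ u : Fin m → ℝ,
      E *ᵥ (fun j : Fin s => if h : (j : ℕ) < m then u ⟨j, h⟩ else 0) = u := by
    intro u
    funext i
    rw [Matrix.mulVec]
    show (∑ j, E i j * _) = u i
    rw [Finset.sum_eq_single (Fin.castLE hms i)]
    · have h1 : ((Fin.castLE hms i : Fin s) : ℕ) = (i : ℕ) := rfl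
      simp [hE, h1, i.isLt]
    · intro j _ hj
      have : ¬ ((j : ℕ) = (i : ℕ)) := by
        intro hji
        exact hj (Fin.ext hji)
      simp [hE, this]
    · simp
  have main : imCol (Matrix.fromBlocks A B (1 : Matrix (Fin s) (Fin s) ℝ)
      (0 : Matrix (Fin s) (Fin m) ℝ)) ≤ S := by
    rintro v ⟨x, hx⟩
    set z : Fin s → ℝ := x ∘ Sum.inl with hz
    set u : Fin m → ℝ := x ∘ Sum.inr with hu
    set z' : Fin s → ℝ := fun j => if h : (j : ℕ) < m then u ⟨j, h⟩ else 0 with hz'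
    have w1 := key A hAmem z
    have w2 := key (A - B * E) hFmem z'
    have w3 := key A hAmem z'
    have hv : v = Sum.elim (A *ᵥ z) z + (Sum.elim (A *ᵥ z') z' -
        Sum.elim ((A - B * E) *ᵥ z') z') := by
      rw [← hx]
      simp only [Matrix.mulVecLin_apply, Matrix.fromBlocks_mulVec]
      funext i
      cases i with
      | inl i =>
        have hBE : (B * E) *ᵥ z' = B *ᵥ u := by
          rw [← Matrix.mulVec_mulVec]
          exact congrArg (B *ᵥ ·) (hEz u)
        simp [Matrix.sub_mulVec, hBE, ← hz, ← hu]
      | inr i => simp [hz]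
    rw [hv]
    exact S.add_mem w1 (S.sub_mem w3 w2)
  refine ⟨main, le_antisymm ?_ main⟩
  rintro v ⟨x, hx⟩
  refine ⟨Sum.elim (Z0 *ᵥ x) (U0 *ᵥ x), ?_⟩
  rw [← hx]
  simp only [Matrix.mulVecLin_apply, Matrix.fromBlocks_mulVec, Matrix.fromRows_mulVec]
  funext i
  cases i with
  | inl i => simp [hdata, Matrix.add_mulVec, ← Matrix.mulVec_mulVec]
  | inr i => simp
end

section
/- Suppose X1 = A·Z0 + B·U0. Let F_des ⊆ ℝ^{n×s} be any set and define 𝒦 := {K ∈ ℝ^{m×s} : there exist F* ∈ F_des and G ∈ ℝ^{N×s} with [F*; I_s; K] = [X1; Z0; U0]·G}. If F_att^data ∩ F_des ≠ ∅, then: (i) 𝒦 is nonempty; and (ii) every K ∈ 𝒦 satisfies A + B·K ∈ F_des. In particular, for every F* ∈ F_des with im [F*; I_s] ⊆ im [X1; Z0] there exists K ∈ ℝ^{m×s} with A + B·K = F*. -/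
open Matrix

/-- `𝒦 = {K : ∃ F* ∈ F_des, ∃ G, [F*; I_s; K] = [X1; Z0; U0] G}`. -/
def calK (n m s N : ℕ) (X1 : Matrix (Fin n) (Fin N) ℝ) (Z0 : Matrix (Fin s) (Fin N) ℝ)
    (U0 : Matrix (Fin m) (Fin N) ℝ) (Fdes : Set (Matrix (Fin n) (Fin s) ℝ)) :
    Set (Matrix (Fin m) (Fin s) ℝ) :=
  {K | ∃ Fstar ∈ Fdes, ∃ G : Matrix (Fin N) (Fin s) ℝ,
    Matrix.fromRows (Matrix.fromRows Fstar (1 : Matrix (Fin s) (Fin s) ℝ)) K =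
      Matrix.fromRows (Matrix.fromRows X1 Z0) U0 * G}

lemma imCol_le_exists_factor {p q r : Type*} [Fintype q] [Fintype r] [DecidableEq r]
    (M : Matrix p r ℝ) (P : Matrix p q ℝ) (h : imCol M ≤ imCol P) :
    ∃ G : Matrix q r ℝ, M = P * G := by
  have hmem : ∀ j : r, M.mulVec (Pi.single j 1) ∈ LinearMap.range P.mulVecLin := fun j =>
    h (LinearMap.mem_range_self M.mulVecLin (Pi.single j 1))
  choose g hg using hmem
  refine ⟨Matrix.of (fun i j => g j i), ?_⟩
  ext i j
  have := congrFun (hg j) i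
  simpa [Matrix.mulVecLin_apply, Matrix.mul_apply, Matrix.mulVec,
    dotProduct, Pi.single_apply, mul_comm] using this.symm

/-- If `X1 = A Z0 + B U0` and `F_att^data ∩ F_des ≠ ∅`, then `𝒦` is nonempty, every
`K ∈ 𝒦` satisfies `A + B K ∈ F_des`, and for every `F* ∈ F_des` with
`im [F*; I_s] ⊆ im [X1; Z0]` there exists `K` with `A + B K = F*`. -/
theorem stmt6 (n m s N : ℕ)
    (A : Matrix (Fin n) (Fin s) ℝ) (B : Matrix (Fin n) (Fin m) ℝ)
    (X1 : Matrix (Fin n) (Fin N) ℝ) (Z0 : Matrix (Fin s) (Fin N) ℝ)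
    (U0 : Matrix (Fin m) (Fin N) ℝ)
    (hdata : X1 = A * Z0 + B * U0)
    (Fdes : Set (Matrix (Fin n) (Fin s) ℝ))
    (hne : (FattData n s N X1 Z0 ∩ Fdes).Nonempty) :
    (calK n m s N X1 Z0 U0 Fdes).Nonempty ∧
    (∀ K ∈ calK n m s N X1 Z0 U0 Fdes, A + B * K ∈ Fdes) ∧
    (∀ Fstar ∈ Fdes,
      imCol (Matrix.fromRows Fstar (1 : Matrix (Fin s) (Fin s) ℝ)) ≤
          imCol (Matrix.fromRows X1 Z0) →
        ∃ K : Matrix (Fin m) (Fin s) ℝ, A + B * K = Fstar) := by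
  -- key construction
  have key : ∀ Fstar : Matrix (Fin n) (Fin s) ℝ,
      imCol (Matrix.fromRows Fstar (1 : Matrix (Fin s) (Fin s) ℝ)) ≤
        imCol (Matrix.fromRows X1 Z0) →
      ∃ G : Matrix (Fin N) (Fin s) ℝ,
        Fstar = X1 * G ∧ (1 : Matrix (Fin s) (Fin s) ℝ) = Z0 * G := by
    intro Fstar h
    obtain ⟨G, hG⟩ := imCol_le_exists_factor _ _ h
    rw [Matrix.fromRows_mul] at hG
    exact ⟨G, congrArg (fun M i j => M (Sum.inl i) j) hG,
      congrArg (fun M i j => M (Sum.inr i) j) hG⟩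
  -- from [F*;I;K] = [X1;Z0;U0]G, extract equalities
  have extract : ∀ (Fstar : Matrix (Fin n) (Fin s) ℝ) (K : Matrix (Fin m) (Fin s) ℝ)
      (G : Matrix (Fin N) (Fin s) ℝ),
      Matrix.fromRows (Matrix.fromRows Fstar (1 : Matrix (Fin s) (Fin s) ℝ)) K =
        Matrix.fromRows (Matrix.fromRows X1 Z0) U0 * G →
      Fstar = X1 * G ∧ (1 : Matrix (Fin s) (Fin s) ℝ) = Z0 * G ∧ K = U0 * G := by
    intro Fstar K G hG
    rw [Matrix.fromRows_mul, Matrix.fromRows_mul] at hG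
    exact ⟨congrArg (fun M i j => M (Sum.inl (Sum.inl i)) j) hG,
      congrArg (fun M i j => M (Sum.inl (Sum.inr i)) j) hG,
      congrArg (fun M i j => M (Sum.inr i) j) hG⟩
  have abk : ∀ (G : Matrix (Fin N) (Fin s) ℝ),
      (1 : Matrix (Fin s) (Fin s) ℝ) = Z0 * G → A + B * (U0 * G) = X1 * G := by
    intro G hZ
    calc A + B * (U0 * G) = A * (Z0 * G) + B * (U0 * G) := by rw [← hZ, Matrix.mul_one]
      _ = (A * Z0 + B * U0) * G := by rw [Matrix.add_mul, Matrix.mul_assoc, Matrix.mul_assoc]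
      _ = X1 * G := by rw [← hdata]
  refine ⟨?_, ?_, ?_⟩
  · obtain ⟨F, hF1, hF2⟩ := hne
    obtain ⟨G, hX, hZ⟩ := key F hF1
    refine ⟨U0 * G, F, hF2, G, ?_⟩
    rw [Matrix.fromRows_mul, Matrix.fromRows_mul, ← hX, ← hZ]
  · rintro K ⟨Fstar, hFdes, G, hG⟩
    obtain ⟨hX, hZ, hK⟩ := extract Fstar K G hG
    rw [hK, abk G hZ, ← hX]; exact hFdes
  · intro Fstar _ h
    obtain ⟨G, hX, hZ⟩ := key Fstar h
    exact ⟨U0 * G, by rw [abk G hZ, ← hX]⟩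
end

section
/- Suppose X1 = A·Z0 + B·U0 and the stacked data matrix [Z0; U0] ∈ ℝ^{(s+m)×N} has full row rank. Then for any set F_des ⊆ ℝ^{n×s}, there exists K ∈ ℝ^{m×s} with A + B·K ∈ F_des if and only if F_att^data ∩ F_des ≠ ∅. -/
open Matrix

/-- Columnwise construction: if each column of `T` is `M.mulVec` of some vector,
then `T = M * G` for some `G`. -/
lemma exists_mul_eq_of_cols {p q N' : Type*} [Fintype N'] (M : Matrix p N' ℝ)
    (T : Matrix p q ℝ)
    (h : ∀ j : q, ∃ g : N' → ℝ, M.mulVec g = fun i => T i j) :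
    ∃ G : Matrix N' q ℝ, M * G = T := by
  choose g hg using h
  refine ⟨Matrix.of fun k j => g j k, ?_⟩
  ext i j
  have := congrFun (hg j) i
  simpa [Matrix.mul_apply, Matrix.mulVec, dotProduct] using this

/-- If `X1 = A Z0 + B U0` and `[Z0; U0]` has full row rank, then for any set `F_des`
there exists `K` with `A + B K ∈ F_des` iff `F_att^data ∩ F_des ≠ ∅`. -/
theorem stmt7 (n m s N : ℕ)
    (A : Matrix (Fin n) (Fin s) ℝ) (B : Matrix (Fin n) (Fin m) ℝ)
    (X1 : Matrix (Fin n) (Fin N) ℝ) (Z0 : Matrix (Fin s) (Fin N) ℝ)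
    (U0 : Matrix (Fin m) (Fin N) ℝ)
    (hdata : X1 = A * Z0 + B * U0)
    (hrank : (Matrix.fromRows Z0 U0).rank = s + m)
    (Fdes : Set (Matrix (Fin n) (Fin s) ℝ)) :
    (∃ K : Matrix (Fin m) (Fin s) ℝ, A + B * K ∈ Fdes) ↔
      (FattData n s N X1 Z0 ∩ Fdes).Nonempty := by
  have hsurj : Function.Surjective (Matrix.fromRows Z0 U0).mulVecLin := by
    rw [← LinearMap.range_eq_top]
    apply Submodule.eq_top_of_finrank_eq
    rw [Matrix.rank] at hrank
    simp [hrank]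
  constructor
  · rintro ⟨K, hK⟩
    -- build G with [Z0;U0] G = [I; K]
    obtain ⟨G, hG⟩ := exists_mul_eq_of_cols (Matrix.fromRows Z0 U0)
      (Matrix.fromRows (1 : Matrix (Fin s) (Fin s) ℝ) K)
      (fun j => by
        obtain ⟨g, hg⟩ := hsurj (fun i => Matrix.fromRows (1 : Matrix (Fin s) (Fin s) ℝ) K i j)
        exact ⟨g, by simpa [Matrix.mulVecLin_apply] using hg⟩)
    rw [Matrix.fromRows_mul] at hG
    have hZ : Z0 * G = 1 := by
      ext i j; exact congrFun (congrFun hG (Sum.inl i)) j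
    have hU : U0 * G = K := by
      ext i j; exact congrFun (congrFun hG (Sum.inr i)) j
    have hX : X1 * G = A + B * K := by
      rw [hdata, Matrix.add_mul, Matrix.mul_assoc, Matrix.mul_assoc, hZ, hU, Matrix.mul_one]
    refine ⟨A + B * K, ?_, hK⟩
    have key : Matrix.fromRows X1 Z0 * G
        = Matrix.fromRows (A + B * K) (1 : Matrix (Fin s) (Fin s) ℝ) := by
      rw [Matrix.fromRows_mul, hX, hZ]
    show imCol _ ≤ imCol _
    rw [← key]
    unfold imCol
    rw [Matrix.mulVecLin_mul]
    exact LinearMap.range_comp_le_range _ _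
  · rintro ⟨F, hF, hFdes⟩
    obtain ⟨G, hG⟩ := exists_mul_eq_of_cols (Matrix.fromRows X1 Z0)
      (Matrix.fromRows F (1 : Matrix (Fin s) (Fin s) ℝ))
      (fun j => by
        have hmem : (fun i => Matrix.fromRows F (1 : Matrix (Fin s) (Fin s) ℝ) i j)
            ∈ imCol (Matrix.fromRows F (1 : Matrix (Fin s) (Fin s) ℝ)) := by
          refine ⟨Pi.single j 1, ?_⟩
          ext i
          simp [Matrix.mulVecLin, Matrix.mulVec_single]
        obtain ⟨g, hg⟩ := hF hmem
        exact ⟨g, by simpa [Matrix.mulVecLin_apply] using hg⟩)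
    rw [Matrix.fromRows_mul] at hG
    have hX : X1 * G = F := by
      ext i j; exact congrFun (congrFun hG (Sum.inl i)) j
    have hZ : Z0 * G = 1 := by
      ext i j; exact congrFun (congrFun hG (Sum.inr i)) j
    refine ⟨U0 * G, ?_⟩
    have : A + B * (U0 * G) = F := by
      rw [← hX, hdata, Matrix.add_mul, Matrix.mul_assoc, Matrix.mul_assoc, hZ, Matrix.mul_one]
    rw [this]; exact hFdes
end

section
/- Suppose X1 = A·Z0 + B·U0. Let F_des ⊆ ℝ^{n×s} be binding and assume F_att^data ∩ F_des = ∅. If K ∈ ℝ^{m×s} satisfies A + B·K ∈ F_des, then there exist matrices Ā ∈ ℝ^{n×s} and B̄ ∈ ℝ^{n×m} consistent with the data, i.e. X1 = Ā·Z0 + B̄·U0, such that Ā + B̄·K ∉ F_des. -/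
open Matrix

/-!
Write `F = A + B K`. Since `F ∈ F_des` is not data-attested, `im [F; I] ⊄ im [X1; Z0]`, so some
row vector `[η₁ᵀ η₂ᵀ]` annihilates `[X1; Z0]` but not `[F; I]`, i.e. `η₁ᵀ X1 + η₂ᵀ Z0 = 0` while
`v := Fᵀ η₁ + η₂ ≠ 0`. Bindingness gives `w` with `F + w vᵀ ∉ F_des`. The rank-one perturbations
`Ā = A + w (η₁ᵀ A + η₂ᵀ)` and `B̄ = B + w η₁ᵀ B` still explain the data, because
`Ā Z0 + B̄ U0 = X1 + w (η₁ᵀ X1 + η₂ᵀ Z0)`, and `Ā + B̄ K = F + w vᵀ`.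
-/

theorem exists_vecMul_eq_zero_and_vecMul_ne_zero_of_not_imCol_le
    {p q r : Type*} [Fintype p] [Fintype q] [Fintype r] {M : Matrix p q ℝ} {P : Matrix p r ℝ} (h : ¬ imCol P ≤ imCol M) :
    ∃ η : p → ℝ, η ᵥ* M = 0 ∧ η ᵥ* P ≠ 0 := by
  classical
  obtain ⟨_, ⟨x, rfl⟩, hx⟩ := SetLike.not_le_iff_exists.mp h
  obtain ⟨φ, hφx, hφM⟩ := Submodule.exists_dual_map_eq_bot_of_notMem hx inferInstance
  set η := (dotProductEquiv ℝ p).symm φ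
  have hφ : ∀ z, φ z = η ⬝ᵥ z := fun z => by
    rw [← (dotProductEquiv ℝ p).apply_symm_apply φ]; rfl
  refine ⟨η, ?_, fun hP => hφx ?_⟩
  · ext j
    have hcol : φ (M *ᵥ Pi.single j 1) ∈ (imCol M).map φ :=
      Submodule.mem_map_of_mem ⟨Pi.single j 1, rfl⟩
    rwa [hφM, Submodule.mem_bot, hφ, dotProduct_mulVec, dotProduct_single, mul_one] at hcol
  · rw [mulVecLin_apply, hφ, dotProduct_mulVec, hP, zero_dotProduct]

section RankOnePerturbation

variable {n s m N : Type*} [Fintype m]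

theorem mul_add_mul_eq_of_rankOne_perturbation [Fintype n] [Fintype s]
    {A : Matrix n s ℝ} {B : Matrix n m ℝ} {X1 : Matrix n N ℝ} {Z0 : Matrix s N ℝ}
    {U0 : Matrix m N ℝ} (hdata : X1 = A * Z0 + B * U0) {η₁ : n → ℝ} {η₂ : s → ℝ}
    (hη : η₁ ᵥ* X1 + η₂ ᵥ* Z0 = 0) (w : n → ℝ) :
    X1 = (A + vecMulVec w (η₁ ᵥ* A + η₂)) * Z0 + (B + vecMulVec w (η₁ ᵥ* B)) * U0 := by
  have hcorr : (η₁ ᵥ* A + η₂) ᵥ* Z0 + (η₁ ᵥ* B) ᵥ* U0 = 0 := by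
    rw [← hη, hdata, vecMul_add, add_vecMul, vecMul_vecMul, vecMul_vecMul]
    abel
  calc X1 = A * Z0 + B * U0 + vecMulVec w ((η₁ ᵥ* A + η₂) ᵥ* Z0 + (η₁ ᵥ* B) ᵥ* U0) := by
        rw [hcorr, ← hdata]
        ext
        simp [vecMulVec_apply]
    _ = _ := by
        rw [vecMulVec_add, Matrix.add_mul, Matrix.add_mul, vecMulVec_mul, vecMulVec_mul]
        abel

theorem add_mul_eq_of_rankOne_perturbation [Fintype n] (A : Matrix n s ℝ) (B : Matrix n m ℝ)
    (K : Matrix m s ℝ) (η₁ : n → ℝ) (η₂ : s → ℝ) (w : n → ℝ) :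
    A + vecMulVec w (η₁ ᵥ* A + η₂) + (B + vecMulVec w (η₁ ᵥ* B)) * K =
      A + B * K + vecMulVec w (η₁ ᵥ* (A + B * K) + η₂) := by
  rw [Matrix.add_mul, vecMulVec_mul, vecMul_add, vecMul_vecMul, add_right_comm _ _ η₂,
    vecMulVec_add, vecMulVec_add, vecMulVec_add]
  abel

end RankOnePerturbation

theorem stmt10_general (n m s N : ℕ)
    (A : Matrix (Fin n) (Fin s) ℝ) (B : Matrix (Fin n) (Fin m) ℝ)
    (X1 : Matrix (Fin n) (Fin N) ℝ) (Z0 : Matrix (Fin s) (Fin N) ℝ)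
    (U0 : Matrix (Fin m) (Fin N) ℝ)
    (hdata : X1 = A * Z0 + B * U0)
    (Fdes : Set (Matrix (Fin n) (Fin s) ℝ))
    (hbind : ∀ F ∈ Fdes, ∀ v : Fin s → ℝ, v ≠ 0 →
      ∃ w : Fin n → ℝ, F + Matrix.vecMulVec w v ∉ Fdes)
    (hempty : FattData n s N X1 Z0 ∩ Fdes = ∅)
    (K : Matrix (Fin m) (Fin s) ℝ) (hK : A + B * K ∈ Fdes) :
    ∃ (Abar : Matrix (Fin n) (Fin s) ℝ) (Bbar : Matrix (Fin n) (Fin m) ℝ),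
      X1 = Abar * Z0 + Bbar * U0 ∧ Abar + Bbar * K ∉ Fdes := by
  have hnotAtt : A + B * K ∉ FattData n s N X1 Z0 := fun hAtt =>
    Set.eq_empty_iff_forall_notMem.mp hempty _ ⟨hAtt, hK⟩
  obtain ⟨η, hηX, hηF⟩ := exists_vecMul_eq_zero_and_vecMul_ne_zero_of_not_imCol_le hnotAtt
  rw [← Sum.elim_comp_inl_inr η, sumElim_vecMul_fromRows] at hηX hηF
  rw [vecMul_one] at hηF
  obtain ⟨w, hw⟩ := hbind _ hK _ hηF
  exact ⟨_, _, mul_add_mul_eq_of_rankOne_perturbation hdata hηX w,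
    by rwa [add_mul_eq_of_rankOne_perturbation]⟩

/-- If `F_des` is binding, `F_att^data ∩ F_des = ∅`, and `A + B K ∈ F_des`, then there are
`Ā, B̄` consistent with the data (`X1 = Ā Z0 + B̄ U0`) such that `Ā + B̄ K ∉ F_des`. -/
theorem stmt10 (n m s N : ℕ) (hn : 1 ≤ n)
    (A : Matrix (Fin n) (Fin s) ℝ) (B : Matrix (Fin n) (Fin m) ℝ)
    (X1 : Matrix (Fin n) (Fin N) ℝ) (Z0 : Matrix (Fin s) (Fin N) ℝ)
    (U0 : Matrix (Fin m) (Fin N) ℝ)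
    (hdata : X1 = A * Z0 + B * U0)
    (Fdes : Set (Matrix (Fin n) (Fin s) ℝ))
    (hbind : ∀ F ∈ Fdes, ∀ v : Fin s → ℝ, v ≠ 0 →
      ∃ w : Fin n → ℝ, F + Matrix.vecMulVec w v ∉ Fdes)
    (hempty : FattData n s N X1 Z0 ∩ Fdes = ∅)
    (K : Matrix (Fin m) (Fin s) ℝ) (hK : A + B * K ∈ Fdes) :
    ∃ (Abar : Matrix (Fin n) (Fin s) ℝ) (Bbar : Matrix (Fin n) (Fin m) ℝ),
      X1 = Abar * Z0 + Bbar * U0 ∧ Abar + Bbar * K ∉ Fdes :=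
  stmt10_general n m s N A B X1 Z0 U0 hdata Fdes hbind hempty K hK
end

section
/- Suppose X1 = A·Z0 + B·U0. Let F_des be a set of matrices [F, F_r] ∈ ℝ^{n×(s+m_r)} and define 𝒦_ext := {[K, K_r] ∈ ℝ^{m×(s+m_r)} : there exist [F*, F_r*] ∈ F_des and G ∈ ℝ^{N×(s+m_r)} with the stacked block equation [[F*, F_r*]; [I_s, 0]; [K, K_r]] = [X1; Z0; U0]·G}. If there exists [F*, F_r*] ∈ F_des with im [[F*, F_r*]; [I_s, 0]] ⊆ im [X1; Z0], then: (i) 𝒦_ext is nonempty; and (ii) every [K, K_r] ∈ 𝒦_ext satisfies A + B·K = F* and B·K_r = F_r* for some [F*, F_r*] ∈ F_des, hence [A + B·K, B·K_r] ∈ F_des. -/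
open Matrix

/-- `𝒦_ext`: pairs `(K, K_r)` for which there exist `(F*, F_r*) ∈ F_des` and `G` with
`[[F*, F_r*]; [I_s, 0]; [K, K_r]] = [X1; Z0; U0] G`. -/
def calKext (n m mr s N : ℕ) (X1 : Matrix (Fin n) (Fin N) ℝ) (Z0 : Matrix (Fin s) (Fin N) ℝ)
    (U0 : Matrix (Fin m) (Fin N) ℝ)
    (Fdes : Set (Matrix (Fin n) (Fin s) ℝ × Matrix (Fin n) (Fin mr) ℝ)) :
    Set (Matrix (Fin m) (Fin s) ℝ × Matrix (Fin m) (Fin mr) ℝ) :=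
  {KK | ∃ FF ∈ Fdes, ∃ G : Matrix (Fin N) (Fin s ⊕ Fin mr) ℝ,
    Matrix.fromRows
        (Matrix.fromRows (Matrix.fromCols FF.1 FF.2)
          (Matrix.fromCols (1 : Matrix (Fin s) (Fin s) ℝ) (0 : Matrix (Fin s) (Fin mr) ℝ)))
        (Matrix.fromCols KK.1 KK.2) =
      Matrix.fromRows (Matrix.fromRows X1 Z0) U0 * G}

/-
The data equation `X1 = A Z0 + B U0` is preserved by right multiplication with `G`. If
`[X1; Z0; U0] G = [[F*, F_r*]; [I, 0]; [K, K_r]]`, it becomes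
`[F*, F_r*] = A [I, 0] + B [K, K_r] = [A + B K, B K_r]`. Such a `G` exists as soon as the
first two block rows lie in the column space of `[X1; Z0]`, and then `U0 G` supplies `[K, K_r]`.
-/

lemma exists_eq_mul_of_imCol_le {p q r : Type*} [Fintype q] [Fintype r] [DecidableEq r]
    {M : Matrix p r ℝ} {P : Matrix p q ℝ} (h : imCol M ≤ imCol P) :
    ∃ G : Matrix q r ℝ, M = P * G := by
  have hcol : ∀ j : r, ∃ v : q → ℝ, P *ᵥ v = M.col j := fun j => by
    rw [← mulVec_single_one]
    exact h ⟨Pi.single j 1, rfl⟩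
  choose g hg using hcol
  refine ⟨Matrix.of fun i j => g j i, ?_⟩
  ext i j
  simpa [mulVec, dotProduct, mul_apply] using (congrFun (hg j) i).symm

lemma fromCols_add_fromCols {α p q r : Type*} [Add α] (A₁ A₂ : Matrix p q α)
    (B₁ B₂ : Matrix p r α) :
    fromCols A₁ B₁ + fromCols A₂ B₂ = fromCols (A₁ + A₂) (B₁ + B₂) := by
  ext i (j | j) <;> rfl

lemma closedLoop_eq_of_data {n s m N mr : Type*} [Fintype s] [Fintype m] [Fintype N]
    [DecidableEq s] {A : Matrix n s ℝ} {B : Matrix n m ℝ} {X1 : Matrix n N ℝ}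
    {Z0 : Matrix s N ℝ} {U0 : Matrix m N ℝ} (hdata : X1 = A * Z0 + B * U0)
    {G : Matrix N (s ⊕ mr) ℝ} {F : Matrix n s ℝ} {Fr : Matrix n mr ℝ} {K : Matrix m s ℝ}
    {Kr : Matrix m mr ℝ} (hX : X1 * G = fromCols F Fr)
    (hZ : Z0 * G = fromCols (1 : Matrix s s ℝ) 0) (hU : U0 * G = fromCols K Kr) :
    A + B * K = F ∧ B * Kr = Fr := by
  have hXG : X1 * G = A * (Z0 * G) + B * (U0 * G) := by
    rw [hdata, Matrix.add_mul, Matrix.mul_assoc, Matrix.mul_assoc]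
  rw [hX, hZ, hU, mul_fromCols, mul_fromCols, fromCols_add_fromCols, Matrix.mul_one,
    Matrix.mul_zero, zero_add] at hXG
  obtain ⟨hF, hFr⟩ := fromCols_inj hXG
  exact ⟨hF.symm, hFr.symm⟩

/-- Data-driven design for open systems: if `X1 = A Z0 + B U0` and there exists
`(F*, F_r*) ∈ F_des` with `im [[F*, F_r*]; [I_s, 0]] ⊆ im [X1; Z0]`, then `𝒦_ext` is
nonempty and every `(K, K_r) ∈ 𝒦_ext` satisfies `A + B K = F*` and `B K_r = F_r*` for
some `(F*, F_r*) ∈ F_des`. -/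
theorem stmt11 (n m mr s N : ℕ)
    (A : Matrix (Fin n) (Fin s) ℝ) (B : Matrix (Fin n) (Fin m) ℝ)
    (X1 : Matrix (Fin n) (Fin N) ℝ) (Z0 : Matrix (Fin s) (Fin N) ℝ)
    (U0 : Matrix (Fin m) (Fin N) ℝ)
    (hdata : X1 = A * Z0 + B * U0)
    (Fdes : Set (Matrix (Fin n) (Fin s) ℝ × Matrix (Fin n) (Fin mr) ℝ))
    (hne : ∃ FF ∈ Fdes,
      imCol (Matrix.fromRows (Matrix.fromCols FF.1 FF.2)
          (Matrix.fromCols (1 : Matrix (Fin s) (Fin s) ℝ)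
            (0 : Matrix (Fin s) (Fin mr) ℝ))) ≤
        imCol (Matrix.fromRows X1 Z0)) :
    (calKext n m mr s N X1 Z0 U0 Fdes).Nonempty ∧
    (∀ KK ∈ calKext n m mr s N X1 Z0 U0 Fdes,
      ∃ FF ∈ Fdes, A + B * KK.1 = FF.1 ∧ B * KK.2 = FF.2) := by
  constructor
  · obtain ⟨FF, hFF, hle⟩ := hne
    obtain ⟨G, hG⟩ := exists_eq_mul_of_imCol_le hle
    refine ⟨((U0 * G).toCols₁, (U0 * G).toCols₂), FF, hFF, G, ?_⟩
    rw [fromRows_mul, fromCols_toCols, ← hG]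
  · rintro KK ⟨FF, hFF, G, hG⟩
    rw [fromRows_mul, fromRows_mul] at hG
    obtain ⟨hXZ, hU⟩ := fromRows_inj hG
    obtain ⟨hX, hZ⟩ := fromRows_inj hXZ
    exact ⟨FF, hFF, closedLoop_eq_of_data hdata hX.symm hZ.symm hU.symm⟩
end

section
/- Suppose X1 = A·Z0 + B·U0, and let G1 ∈ ℝ^{N×s}, G2 ∈ ℝ^{N×m_r}, M ∈ ℝ^{n×s}, Θ ∈ ℝ^{n×n} satisfy: Z0·G1 = I_s, Z0·G2 = 0, X1·G1 = Θ·M, and Θ + Θᵀ is negative semidefinite. Define K := U0·G1 and K_r := U0·G2. Then: (i) A + B·K = X1·G1 = Θ·M and B·K_r = X1·G2; and (ii) for all z ∈ ℝ^s and all r ∈ ℝ^{m_r}, the dissipation inequality (M·z)ᵀ·((A + B·K)·z + B·K_r·r) ≤ rᵀ·(G2ᵀ·X1ᵀ·M·z) holds. -/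
open Matrix

/-- Data-driven feedback cyclo-passivation: with `K = U0 G1`, `K_r = U0 G2`, the constraints
`Z0 G1 = I`, `Z0 G2 = 0`, `X1 G1 = Θ M` and `Θ + Θᵀ ⪯ 0` give the closed-loop identities
`A + B K = X1 G1 = Θ M`, `B K_r = X1 G2`, and the passivity dissipation inequality. -/
theorem stmt12 (n m mr s N : ℕ)
    (A : Matrix (Fin n) (Fin s) ℝ) (B : Matrix (Fin n) (Fin m) ℝ)
    (X1 : Matrix (Fin n) (Fin N) ℝ) (Z0 : Matrix (Fin s) (Fin N) ℝ)
    (U0 : Matrix (Fin m) (Fin N) ℝ)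
    (hdata : X1 = A * Z0 + B * U0)
    (G1 : Matrix (Fin N) (Fin s) ℝ) (G2 : Matrix (Fin N) (Fin mr) ℝ)
    (M : Matrix (Fin n) (Fin s) ℝ) (Θ : Matrix (Fin n) (Fin n) ℝ)
    (hG1 : Z0 * G1 = 1) (hG2 : Z0 * G2 = 0) (hΘM : X1 * G1 = Θ * M)
    (hnsd : ∀ x : Fin n → ℝ, x ⬝ᵥ (Θ + Θᵀ).mulVec x ≤ 0) :
    (A + B * (U0 * G1) = X1 * G1 ∧ X1 * G1 = Θ * M ∧ B * (U0 * G2) = X1 * G2) ∧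
    (∀ (z : Fin s → ℝ) (r : Fin mr → ℝ),
      (M.mulVec z) ⬝ᵥ ((A + B * (U0 * G1)).mulVec z + (B * (U0 * G2)).mulVec r) ≤
        r ⬝ᵥ ((G2ᵀ * X1ᵀ * M).mulVec z)) := by
  have h1 : A + B * (U0 * G1) = X1 * G1 := by
    rw [hdata, Matrix.add_mul, Matrix.mul_assoc, Matrix.mul_assoc, hG1, Matrix.mul_one]
  have h3 : B * (U0 * G2) = X1 * G2 := by
    rw [hdata, Matrix.add_mul, Matrix.mul_assoc, Matrix.mul_assoc, hG2, Matrix.mul_zero, zero_add]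
  refine ⟨⟨h1, hΘM, h3⟩, fun z r => ?_⟩
  rw [h1, hΘM, h3]
  set x := M.mulVec z with hx
  have hΘx : x ⬝ᵥ (Θ * M).mulVec z = x ⬝ᵥ Θ.mulVec x := by
    rw [← mulVec_mulVec]
  have hsym : x ⬝ᵥ Θᵀ.mulVec x = x ⬝ᵥ Θ.mulVec x := by
    rw [mulVec_transpose, dotProduct_comm]; exact (dotProduct_mulVec x Θ x).symm
  have hneg : x ⬝ᵥ Θ.mulVec x ≤ 0 := by
    have := hnsd x
    rw [add_mulVec, dotProduct_add, hsym] at this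
    linarith
  have hcross : x ⬝ᵥ (X1 * G2).mulVec r = r ⬝ᵥ ((G2ᵀ * X1ᵀ * M).mulVec z) := by
    rw [dotProduct_mulVec x (X1*G2) r, dotProduct_comm, ← mulVec_transpose, transpose_mul,
      hx, mulVec_mulVec, Matrix.mul_assoc]
  rw [dotProduct_add, hΘx, hcross]
  linarith
end

section
/- Let Z : ℝ^n → ℝ^s be continuously differentiable and let M ∈ ℝ^{n×s} be such that the n×n matrix M·Z'(x) is symmetric for every x ∈ ℝ^n, where Z'(x) denotes the Jacobian of Z at x. Define S : ℝ^n → ℝ by S(x) = ∫₀¹ ⟨x, M·Z(t·x)⟩ dt. Then S is differentiable and its gradient satisfies ∇S(x) = M·Z(x) for every x ∈ ℝ^n. -/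
/-!
The map `ω y = ⟨M Z(y), ·⟩` is a `C¹` one-form whose derivative is the bilinear form
`(u, v) ↦ ⟨M Z'(y) u, v⟩`, so the symmetry of `M Z'(y)` says that `ω` is closed, and `S` is
its radial potential `S x = ∫₀¹ ω(t x) x dt` (the Poincaré lemma on a star-shaped domain).
Differentiating under the integral sign gives `S'(x) = ∫₀¹ (ω(t x) + t ω'(t x) x) dt`, and by
closedness the integrand is the `t`-derivative of `t ω(t x)`, so the integral equals `ω(x)`.
-/

open Matrix

/-- The continuous linear map `v ↦ a ⬝ᵥ v` on `ℝ^n`. -/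
noncomputable def dotCLM {n : ℕ} (a : Fin n → ℝ) : (Fin n → ℝ) →L[ℝ] ℝ :=
  LinearMap.toContinuousLinearMap
    { toFun := fun v => a ⬝ᵥ v
      map_add' := by intro x y; simp [dotProduct_add]
      map_smul' := by intro c x; simp [dotProduct_smul] }

open MeasureTheory Set Filter Topology

section

variable {E F : Type*} [NormedAddCommGroup E] [NormedSpace ℝ E]
  [NormedAddCommGroup F] [NormedSpace ℝ F]

theorem hasFDerivAt_intervalIntegral_of_continuous_fderiv {f : E → ℝ → F}
    {f' : E → ℝ → E →L[ℝ] F} (hf : ∀ y, Continuous (f y))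
    (hf' : Continuous (Function.uncurry f')) (hdiff : ∀ y t, HasFDerivAt (f · t) (f' y t) y)
    (a b : ℝ) (x : E) :
    HasFDerivAt (fun y => ∫ t in a..b, f y t) (∫ t in a..b, f' x t) x := by
  have hf'x : Continuous (f' x) := hf'.comp (Continuous.prodMk_right x)
  -- By the tube lemma, `f' y` stays uniformly close to `f' x` on `[a, b]` for `y` near `x`.
  have hnear : ∀ᶠ y in 𝓝 x, ∀ t ∈ uIcc a b, ‖f' y t - f' x t‖ < 1 := by
    refine isCompact_uIcc.eventually_forall_of_forall_eventually fun t _ => ?_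
    have hdev : Continuous fun p : E × ℝ => ‖f' p.1 p.2 - f' x p.2‖ :=
      (hf'.sub (hf'x.comp continuous_snd)).norm
    exact hdev.continuousAt.eventually_lt continuousAt_const (by simp)
  refine hasFDerivAt_integral_of_dominated_of_fderiv_le'' (bound := fun t => ‖f' x t‖ + 1) hnear
    (.of_forall fun y => (hf y).aestronglyMeasurable) ((hf x).intervalIntegrable a b)
    hf'x.aestronglyMeasurable ?_ ((hf'x.norm.add continuous_const).intervalIntegrable a b)
    (.of_forall fun t y _ => hdiff y t)
  filter_upwards [ae_restrict_mem measurableSet_uIoc] with t ht y hy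
  calc ‖f' y t‖ ≤ ‖f' x t‖ + ‖f' y t - f' x t‖ := norm_le_norm_add_norm_sub' _ _
    _ ≤ ‖f' x t‖ + 1 := by gcongr; exact (hy t (uIoc_subset_uIcc ht)).le

noncomputable def radialPotential (ω : E → E →L[ℝ] F) (x : E) : F :=
  ∫ t in (0 : ℝ)..1, ω (t • x) x

theorem hasFDerivAt_radialPotential [CompleteSpace F] {ω : E → E →L[ℝ] F}
    (hω : ContDiff ℝ 1 ω) (hclosed : ∀ x u v, fderiv ℝ ω x u v = fderiv ℝ ω x v u) (x : E) :
    HasFDerivAt (radialPotential ω) (ω x) x := by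
  have hω_diff (p : E) : HasFDerivAt ω (fderiv ℝ ω p) p :=
    (hω.differentiable one_ne_zero p).hasFDerivAt
  have hω'_cont : Continuous (fderiv ℝ ω) := hω.continuous_fderiv one_ne_zero
  set f' : E → ℝ → E →L[ℝ] F := fun y t => ω (t • y) + t • fderiv ℝ ω (t • y) y
  have hf'_cont : Continuous (Function.uncurry f') := by
    have hty : Continuous fun p : E × ℝ => p.2 • p.1 := continuous_snd.smul continuous_fst
    exact (hω.continuous.comp hty).add
      (continuous_snd.smul ((hω'_cont.comp hty).clm_apply continuous_fst))
  have hdiff (y : E) (t : ℝ) : HasFDerivAt (fun y => ω (t • y) y) (f' y t) y := by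
    have hscale : HasFDerivAt (fun y : E => t • y) (t • ContinuousLinearMap.id ℝ E) y :=
      (hasFDerivAt_id y).const_smul t
    refine (((hω_diff _).comp y hscale).clm_apply (hasFDerivAt_id y)).congr_fderiv ?_
    ext v
    -- closedness turns the transposed derivative `(ω' (t • y)).flip y` into `ω' (t • y) y`
    simp [f', hclosed (t • y) v y]
  have hint : ∫ t in (0 : ℝ)..1, f' x t = ω x := by
    ext v
    have hf'x : Continuous (f' x) := hf'_cont.comp (Continuous.prodMk_right x)
    rw [ContinuousLinearMap.intervalIntegral_apply (hf'x.intervalIntegrable 0 1)]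
    have hprim (t : ℝ) : HasDerivAt (fun t : ℝ => t • ω (t • x) v) (f' x t v) t := by
      have hline : HasDerivAt (fun t : ℝ => t • x) x t := by
        simpa using (hasDerivAt_id t).smul_const x
      have hωv : HasDerivAt (fun t : ℝ => ω (t • x) v) (fderiv ℝ ω (t • x) x v) t := by
        simpa using ((hω_diff _).comp_hasDerivAt t hline).clm_apply (hasDerivAt_const t v)
      exact ((hasDerivAt_id' t).smul hωv).congr_deriv (by simp [f', add_comm])
    rw [intervalIntegral.integral_eq_sub_of_hasDerivAt (fun t _ => hprim t)
      ((hf'x.clm_apply continuous_const).intervalIntegrable 0 1)]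
    simp
  rw [← hint]
  exact hasFDerivAt_intervalIntegral_of_continuous_fderiv
    (fun y => (hω.continuous.comp (continuous_id.smul continuous_const)).clm_apply
      continuous_const) hf'_cont hdiff 0 1 x

end

theorem dotCLM_apply {n : ℕ} (a v : Fin n → ℝ) : dotCLM a v = a ⬝ᵥ v := rfl

namespace Matrix

variable {R m n : Type*} [CommSemiring R] [Fintype m] [Fintype n]

theorem IsSymm.mulVec_dotProduct_comm {A : Matrix n n R} (hA : A.IsSymm) (u v : n → R) :
    A *ᵥ u ⬝ᵥ v = A *ᵥ v ⬝ᵥ u := by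
  rw [dotProduct_comm, dotProduct_mulVec, ← mulVec_transpose, hA.eq]

theorem mul_toMatrix'_mulVec [DecidableEq n] (M : Matrix n m R) (f : (n → R) →ₗ[R] m → R)
    (u : n → R) : (M * LinearMap.toMatrix' f) *ᵥ u = M *ᵥ f u := by
  rw [← mulVec_mulVec, LinearMap.toMatrix'_mulVec]

noncomputable def mulVecDotCLM {n s : ℕ} (M : Matrix (Fin n) (Fin s) ℝ) :
    (Fin s → ℝ) →L[ℝ] (Fin n → ℝ) →L[ℝ] ℝ :=
  LinearMap.toContinuousLinearMap
    { toFun := fun a => dotCLM (M *ᵥ a)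
      map_add' := fun a b => by ext v; simp [dotCLM_apply, mulVec_add, add_dotProduct]
      map_smul' := fun c a => by ext v; simp [dotCLM_apply, mulVec_smul, smul_dotProduct] }

theorem mulVecDotCLM_apply {n s : ℕ} (M : Matrix (Fin n) (Fin s) ℝ) (a : Fin s → ℝ)
    (v : Fin n → ℝ) : M.mulVecDotCLM a v = M *ᵥ a ⬝ᵥ v := rfl

end Matrix

/-- Hadamard-lemma-type statement: if `Z` is `C¹` and `M Z'(x)` is symmetric for all `x`,
then `S(x) = ∫₀¹ ⟨x, M Z(t x)⟩ dt` is differentiable with gradient `∇S(x) = M Z(x)`,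
i.e. its derivative at `x` is the linear functional `v ↦ ⟨M Z(x), v⟩`. -/
theorem stmt13 (n s : ℕ)
    (Z : (Fin n → ℝ) → (Fin s → ℝ)) (hZ : ContDiff ℝ 1 Z)
    (M : Matrix (Fin n) (Fin s) ℝ)
    (hsymm : ∀ x : Fin n → ℝ,
      (M * LinearMap.toMatrix' ((fderiv ℝ Z x : (Fin n → ℝ) →L[ℝ] (Fin s → ℝ)) :
        (Fin n → ℝ) →ₗ[ℝ] (Fin s → ℝ))).IsSymm) :
    ∀ x : Fin n → ℝ,
      HasFDerivAt (fun y : Fin n → ℝ => ∫ t in (0:ℝ)..1, y ⬝ᵥ M.mulVec (Z (t • y)))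
        (dotCLM (M.mulVec (Z x))) x := by
  intro x
  have hfderiv (p : Fin n → ℝ) :
      fderiv ℝ (M.mulVecDotCLM ∘ Z) p = M.mulVecDotCLM.comp (fderiv ℝ Z p) :=
    (M.mulVecDotCLM.hasFDerivAt.comp p ((hZ.differentiable one_ne_zero p).hasFDerivAt)).fderiv
  have hclosed (p u v : Fin n → ℝ) :
      fderiv ℝ (M.mulVecDotCLM ∘ Z) p u v = fderiv ℝ (M.mulVecDotCLM ∘ Z) p v u := by
    simpa [hfderiv, Matrix.mulVecDotCLM_apply, Matrix.mul_toMatrix'_mulVec] using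
      (hsymm p).mulVec_dotProduct_comm u v
  have hpotential : (fun y : Fin n → ℝ => ∫ t in (0:ℝ)..1, y ⬝ᵥ M *ᵥ Z (t • y)) =
      radialPotential (M.mulVecDotCLM ∘ Z) := by
    funext y
    simp [radialPotential, Matrix.mulVecDotCLM_apply, dotProduct_comm]
  rw [hpotential]
  exact hasFDerivAt_radialPotential (M.mulVecDotCLM.contDiff.comp hZ) hclosed x
end

section
/- Let X1 ∈ ℝ^{n×N}, Z0 ∈ ℝ^{s×N} with Z0 of full row rank, J ∈ ℝ^{s×n}, and L ∈ ℝ^{n×s} a left inverse of J (L·J = I_n). Suppose P ∈ ℝ^{n×n} is symmetric and Y ∈ ℝ^{N×n} is such that the 2n×2n block matrix [[P, X1·Y], [Yᵀ·X1ᵀ, P]] is positive definite and J·P = Z0·Y. Define Z0⁺ := Z0ᵀ·(Z0·Z0ᵀ)⁻¹, G := Z0⁺ + (I_N − Z0⁺·Z0)·Y·P⁻¹·L, and F := X1·G. Then: (i) P is positive definite; (ii) Z0·G = I_s; and (iii) F·J·P·(F·J)ᵀ − P is negative definite. -/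
/-!
Because `L J = 1` and `J P = Z0 Y`, the gain satisfies `G J P = Y`, so `F J = X1 Y P⁻¹` and
`F J P (F J)ᵀ = (X1 Y) P⁻¹ (X1 Y)ᵀ`. Thus `P - F J P (F J)ᵀ` is the Schur complement of the
lower-right block `P` of the positive definite block matrix. That Schur complement is positive
semidefinite, and nonsingular because its determinant divides the nonzero determinant of the
block matrix.
-/

open Matrix

namespace Matrix

theorem isUnit_of_rank_eq_card {m K : Type*} [Fintype m] [DecidableEq m] [Field K]
    {A : Matrix m m K} (h : A.rank = Fintype.card m) : IsUnit A := by
  rw [← mulVec_surjective_iff_isUnit]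
  have hrange : LinearMap.range A.mulVecLin = ⊤ := by
    apply Submodule.eq_top_of_finrank_eq
    simpa [rank] using h
  exact LinearMap.range_eq_top.mp hrange

theorem mul_transpose_mul_mul_transpose_inv_eq_one {K m n : Type*} [Field K] [LinearOrder K]
    [IsStrictOrderedRing K] [Fintype m] [Fintype n] [DecidableEq m] {Z : Matrix m n K} (hZ : Z.rank = Fintype.card m) :
    Z * (Zᵀ * (Z * Zᵀ)⁻¹) = 1 := by
  have hZZ : IsUnit (Z * Zᵀ) := isUnit_of_rank_eq_card (by rw [rank_self_mul_transpose, hZ])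
  rw [← Matrix.mul_assoc, mul_nonsing_inv _ ((isUnit_iff_isUnit_det _).mp hZZ)]

section RightInverse

variable {R m n k : Type*} [CommRing R] [Fintype m] [Fintype n] [Fintype k]

theorem mul_add_one_sub_mul_mul_eq_one [DecidableEq m] [DecidableEq n] {Z : Matrix m n R}
    {Zr : Matrix n m R} (hZ : Z * Zr = 1) (K : Matrix n m R) :
    Z * (Zr + (1 - Zr * Z) * K) = 1 := by
  rw [Matrix.mul_add, ← Matrix.mul_assoc, Matrix.mul_sub, ← Matrix.mul_assoc, hZ, Matrix.one_mul,
    Matrix.mul_one, sub_self, Matrix.zero_mul, add_zero]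

theorem add_one_sub_mul_mul_mul_inv_mul_mul_mul_eq [DecidableEq n] [DecidableEq k]
    {Z : Matrix m n R} {Zr : Matrix n m R} {J : Matrix m k R} {L : Matrix k m R}
    {P : Matrix k k R} {Y : Matrix n k R} (hL : L * J = 1) (hP : IsUnit P.det)
    (hJP : J * P = Z * Y) : (Zr + (1 - Zr * Z) * Y * P⁻¹ * L) * J * P = Y := by
  have hcorr : (1 - Zr * Z) * Y * P⁻¹ * L * J * P = (1 - Zr * Z) * Y := by
    simp only [Matrix.mul_assoc]
    rw [← Matrix.mul_assoc L, hL, Matrix.one_mul, nonsing_inv_mul _ hP, Matrix.mul_one]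
  rw [Matrix.add_mul, Matrix.add_mul, hcorr, Matrix.mul_assoc Zr, hJP, Matrix.sub_mul,
    Matrix.one_mul, Matrix.mul_assoc]
  abel

end RightInverse

theorem mul_mul_transpose_eq_of_mul_eq {R m n : Type*} [CommRing R] [Fintype n] [DecidableEq n]
    {M B : Matrix m n R} {P : Matrix n n R} (hP : P.IsSymm) (hdet : IsUnit P.det)
    (hMP : M * P = B) : M * P * Mᵀ = B * P⁻¹ * Bᵀ := by
  have hM : M = B * P⁻¹ := by rw [← hMP, Matrix.mul_assoc, mul_nonsing_inv _ hdet, Matrix.mul_one]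
  rw [hM, transpose_mul, transpose_nonsing_inv, hP.eq, Matrix.mul_assoc B, nonsing_inv_mul _ hdet,
    Matrix.mul_one, Matrix.mul_assoc]

open scoped ComplexOrder in
theorem PosDef.sub_mul_inv_mul_conjTranspose {𝕜 m n : Type*} [RCLike 𝕜] [Fintype m] [Fintype n]
    [DecidableEq m] [DecidableEq n] {A : Matrix m m 𝕜} {B : Matrix m n 𝕜} {D : Matrix n n 𝕜}
    (h : (fromBlocks A B Bᴴ D).PosDef) : (A - B * D⁻¹ * Bᴴ).PosDef := by
  have hD : D.PosDef := h.submatrix Sum.inr_injective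
  let _ := hD.isUnit.invertible
  have hS := (PosDef.fromBlocks₂₂ A B hD).mp h.posSemidef
  refine hS.posDef_iff_det_ne_zero.mpr fun hdet => ?_
  have hblk := det_fromBlocks₂₂ A B Bᴴ D
  rw [invOf_eq_nonsing_inv, hdet, mul_zero] at hblk
  exact ((isUnit_iff_isUnit_det _).mp h.isUnit).ne_zero hblk

end Matrix

theorem stmt14_general (n s N : ℕ)
    (X1 : Matrix (Fin n) (Fin N) ℝ) (Z0 : Matrix (Fin s) (Fin N) ℝ)
    (J : Matrix (Fin s) (Fin n) ℝ) (L : Matrix (Fin n) (Fin s) ℝ)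
    (hZ0 : Z0.rank = s) (hL : L * J = 1)
    (P : Matrix (Fin n) (Fin n) ℝ) (Y : Matrix (Fin N) (Fin n) ℝ)
    (hblk : (Matrix.fromBlocks P (X1 * Y) (Yᵀ * X1ᵀ) P).PosDef)
    (hJP : J * P = Z0 * Y)
    (Z0p : Matrix (Fin N) (Fin s) ℝ) (hZ0p : Z0p = Z0ᵀ * (Z0 * Z0ᵀ)⁻¹)
    (G : Matrix (Fin N) (Fin s) ℝ)
    (hG : G = Z0p + ((1 : Matrix (Fin N) (Fin N) ℝ) - Z0p * Z0) * Y * P⁻¹ * L)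
    (F : Matrix (Fin n) (Fin s) ℝ) (hF : F = X1 * G) :
    P.PosDef ∧
    Z0 * G = 1 ∧
    (∀ x : Fin n → ℝ, x ≠ 0 →
      x ⬝ᵥ ((F * J * P * (F * J)ᵀ - P).mulVec x) < 0) := by
  rw [show Yᵀ * X1ᵀ = (X1 * Y)ᴴ by rw [conjTranspose_eq_transpose_of_trivial, transpose_mul]]
    at hblk
  have hP : P.PosDef := hblk.submatrix Sum.inl_injective
  have hPdet : IsUnit P.det := (isUnit_iff_isUnit_det _).mp hP.isUnit
  have hZ0Z0p : Z0 * Z0p = 1 :=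
    hZ0p ▸ mul_transpose_mul_mul_transpose_inv_eq_one (by simpa using hZ0)
  have hFJP : F * J * P = X1 * Y := by
    rw [hF, hG, Matrix.mul_assoc X1, Matrix.mul_assoc X1,
      add_one_sub_mul_mul_mul_inv_mul_mul_mul_eq hL hPdet hJP]
  refine ⟨hP, ?_, fun x hx => ?_⟩
  · simpa only [hG, Matrix.mul_assoc] using mul_add_one_sub_mul_mul_eq_one hZ0Z0p (Y * P⁻¹ * L)
  · have hS := hblk.sub_mul_inv_mul_conjTranspose
    rw [conjTranspose_eq_transpose_of_trivial,
      ← mul_mul_transpose_eq_of_mul_eq (isHermitian_iff_isSymm.mp hP.1) hPdet hFJP] at hS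
    rw [← neg_sub, neg_mulVec, dotProduct_neg, neg_neg_iff_pos]
    simpa using hS.dotProduct_mulVec_pos hx

/-- LMI-based data-driven stabilization via linearization: if `Z0` has full row rank,
`L J = I`, `P` is symmetric, the block matrix `[[P, X1 Y], [Yᵀ X1ᵀ, P]]` is positive
definite and `J P = Z0 Y`, then with `Z0⁺ = Z0ᵀ (Z0 Z0ᵀ)⁻¹`,
`G = Z0⁺ + (I - Z0⁺ Z0) Y P⁻¹ L` and `F = X1 G` we have: `P` is positive definite,
`Z0 G = I`, and `F J P (F J)ᵀ - P` is negative definite. -/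
theorem stmt14 (n s N : ℕ)
    (X1 : Matrix (Fin n) (Fin N) ℝ) (Z0 : Matrix (Fin s) (Fin N) ℝ)
    (J : Matrix (Fin s) (Fin n) ℝ) (L : Matrix (Fin n) (Fin s) ℝ)
    (hZ0 : Z0.rank = s) (hL : L * J = 1)
    (P : Matrix (Fin n) (Fin n) ℝ) (Y : Matrix (Fin N) (Fin n) ℝ)
    (hPsymm : P.IsSymm)
    (hblk : (Matrix.fromBlocks P (X1 * Y) (Yᵀ * X1ᵀ) P).PosDef)
    (hJP : J * P = Z0 * Y)
    (Z0p : Matrix (Fin N) (Fin s) ℝ) (hZ0p : Z0p = Z0ᵀ * (Z0 * Z0ᵀ)⁻¹)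
    (G : Matrix (Fin N) (Fin s) ℝ)
    (hG : G = Z0p + ((1 : Matrix (Fin N) (Fin N) ℝ) - Z0p * Z0) * Y * P⁻¹ * L)
    (F : Matrix (Fin n) (Fin s) ℝ) (hF : F = X1 * G) :
    P.PosDef ∧
    Z0 * G = 1 ∧
    (∀ x : Fin n → ℝ, x ≠ 0 →
      x ⬝ᵥ ((F * J * P * (F * J)ᵀ - P).mulVec x) < 0) :=
  stmt14_general n s N X1 Z0 J L hZ0 hL P Y hblk hJP Z0p hZ0p G hG F hF
end

section
/- Let X1 ∈ ℝ^{n×N}, Z0 ∈ ℝ^{n×N}, and Q ∈ ℝ^{N×n} be such that Z0·Q is symmetric positive definite and X1·Q + (X1·Q)ᵀ is negative semidefinite. Define M := (Z0·Q)⁻¹ and G1 := Q·(Z0·Q)⁻¹. Then: (i) M is symmetric positive definite; (ii) Z0·G1 = I_n; and (iii) X1·G1·M⁻¹ + M⁻¹·(X1·G1)ᵀ is negative semidefinite. -/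
open Matrix

/-- Data-driven feedback passivation for linear systems: if `Z0 Q` is symmetric positive
definite and `X1 Q + (X1 Q)ᵀ` is negative semidefinite, then with `M = (Z0 Q)⁻¹` and
`G1 = Q (Z0 Q)⁻¹` we have: `M` is symmetric positive definite, `Z0 G1 = I`, and
`X1 G1 M⁻¹ + M⁻¹ (X1 G1)ᵀ` is negative semidefinite. -/
theorem stmt15 (n N : ℕ)
    (X1 : Matrix (Fin n) (Fin N) ℝ) (Z0 : Matrix (Fin n) (Fin N) ℝ)
    (Q : Matrix (Fin N) (Fin n) ℝ)
    (hZQ : (Z0 * Q).PosDef)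
    (hnsd : ∀ x : Fin n → ℝ, x ⬝ᵥ ((X1 * Q + (X1 * Q)ᵀ).mulVec x) ≤ 0)
    (M : Matrix (Fin n) (Fin n) ℝ) (hM : M = (Z0 * Q)⁻¹)
    (G1 : Matrix (Fin N) (Fin n) ℝ) (hG1 : G1 = Q * (Z0 * Q)⁻¹) :
    (M.IsSymm ∧ M.PosDef) ∧
    Z0 * G1 = 1 ∧
    (∀ x : Fin n → ℝ,
      x ⬝ᵥ ((X1 * G1 * M⁻¹ + M⁻¹ * (X1 * G1)ᵀ).mulVec x) ≤ 0) := by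
  have hdet : IsUnit (Z0 * Q).det := isUnit_iff_ne_zero.mpr hZQ.det_pos.ne'
  have hsym : (Z0 * Q)ᵀ = Z0 * Q := hZQ.isHermitian
  have hMpd : M.PosDef := hM ▸ hZQ.inv
  have hMsymm : M.IsSymm := hMpd.isHermitian
  have hZG : Z0 * G1 = 1 := by
    rw [hG1, ← Matrix.mul_assoc, Matrix.mul_nonsing_inv _ hdet]
  refine ⟨⟨hMsymm, hMpd⟩, hZG, ?_⟩
  have hMinv : M⁻¹ = Z0 * Q := by
    rw [hM, Matrix.nonsing_inv_nonsing_inv _ hdet]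
  have hinvsym : ((Z0 * Q)⁻¹)ᵀ = (Z0 * Q)⁻¹ := by
    rw [Matrix.transpose_nonsing_inv, hsym]
  have key : X1 * G1 * M⁻¹ + M⁻¹ * (X1 * G1)ᵀ = X1 * Q + (X1 * Q)ᵀ := by
    rw [hMinv, hG1]
    have h1 : X1 * (Q * (Z0 * Q)⁻¹) * (Z0 * Q) = X1 * Q := by
      rw [Matrix.mul_assoc X1, Matrix.mul_assoc Q, Matrix.nonsing_inv_mul _ hdet,
        Matrix.mul_one]
    have h2 : Z0 * Q * (X1 * (Q * (Z0 * Q)⁻¹))ᵀ = (X1 * Q)ᵀ := by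
      rw [Matrix.transpose_mul, Matrix.transpose_mul, hinvsym, ← Matrix.mul_assoc,
        ← Matrix.mul_assoc, Matrix.mul_nonsing_inv _ hdet, Matrix.one_mul,
        ← Matrix.transpose_mul]
    rw [h1, h2]
  rw [key]
  exact hnsd
end

section
/- Fix J ∈ ℝ^{s×n} and define F_des := {F ∈ ℝ^{n×s} : there exists a symmetric positive definite P ∈ ℝ^{n×n} with F·J·P·(F·J)ᵀ − P negative definite}. (i) For every v ∈ ℝ^s with vᵀ·J = 0, every F ∈ F_des, and every w ∈ ℝ^n, the matrix F + w·vᵀ belongs to F_des. (ii) Consequently, if s > n (so that J has a nonzero left kernel vector) and n ≥ 1, the set F_des is nonempty (it contains the zero matrix) and is not binding. -/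
open Matrix

/-- `F_des` for stabilization of the linearized closed loop: matrices `F` for which some
symmetric positive definite `P` makes `F J P (F J)ᵀ - P` negative definite. -/
def Fdes16 (n s : ℕ) (J : Matrix (Fin s) (Fin n) ℝ) : Set (Matrix (Fin n) (Fin s) ℝ) :=
  {F | ∃ P : Matrix (Fin n) (Fin n) ℝ, P.PosDef ∧
    ∀ x : Fin n → ℝ, x ≠ 0 → x ⬝ᵥ ((F * J * P * (F * J)ᵀ - P).mulVec x) < 0}

lemma aux16_mul (n s : ℕ) (J : Matrix (Fin s) (Fin n) ℝ) (v : Fin s → ℝ)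
    (hv : Matrix.vecMul v J = 0) (w : Fin n → ℝ) :
    Matrix.vecMulVec w v * J = 0 := by
  ext i j
  simp only [Matrix.mul_apply, Matrix.vecMulVec_apply, Matrix.zero_apply]
  have := congrFun hv j
  simp only [Matrix.vecMul, dotProduct, Pi.zero_apply] at this
  calc ∑ k, w i * v k * J k j = w i * ∑ k, v k * J k j := by
        rw [Finset.mul_sum]; congr 1; ext k; ring
    _ = 0 := by rw [this, mul_zero]

lemma aux16_zero (n s : ℕ) (J : Matrix (Fin s) (Fin n) ℝ) :
    (0 : Matrix (Fin n) (Fin s) ℝ) ∈ Fdes16 n s J := by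
  refine ⟨1, Matrix.PosDef.one, fun x hx => ?_⟩
  have hx' : 0 < x ⬝ᵥ x := by
    have hnn : 0 ≤ x ⬝ᵥ x := Finset.sum_nonneg fun i _ => mul_self_nonneg _
    rcases lt_or_eq_of_le hnn with h | h
    · exact h
    · exact absurd (dotProduct_self_eq_zero.mp h.symm) hx
  simp only [Matrix.zero_mul, Matrix.sub_mulVec, Matrix.zero_mulVec, Matrix.one_mulVec,
    dotProduct_sub, dotProduct_zero]
  linarith

/-- (i) Perturbations `w vᵀ` with `vᵀ J = 0` keep elements of `F_des` in `F_des`.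
(ii) If `s > n`, then `F_des` contains the zero matrix and is not binding. -/
theorem stmt16 (n s : ℕ) (hn : 1 ≤ n) (J : Matrix (Fin s) (Fin n) ℝ) :
    (∀ v : Fin s → ℝ, Matrix.vecMul v J = 0 →
      ∀ F ∈ Fdes16 n s J, ∀ w : Fin n → ℝ, F + Matrix.vecMulVec w v ∈ Fdes16 n s J) ∧
    (n < s →
      (0 : Matrix (Fin n) (Fin s) ℝ) ∈ Fdes16 n s J ∧
      ¬(∀ F ∈ Fdes16 n s J, ∀ v : Fin s → ℝ, v ≠ 0 →
          ∃ w : Fin n → ℝ, F + Matrix.vecMulVec w v ∉ Fdes16 n s J)) := by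
  have key : ∀ v : Fin s → ℝ, Matrix.vecMul v J = 0 →
      ∀ F ∈ Fdes16 n s J, ∀ w : Fin n → ℝ, F + Matrix.vecMulVec w v ∈ Fdes16 n s J := by
    intro v hv F hF w
    obtain ⟨P, hP, hneg⟩ := hF
    refine ⟨P, hP, fun x hx => ?_⟩
    have heq : (F + Matrix.vecMulVec w v) * J = F * J := by
      rw [Matrix.add_mul, aux16_mul n s J v hv w, add_zero]
    rw [heq]
    exact hneg x hx
  refine ⟨key, fun hns => ⟨aux16_zero n s J, ?_⟩⟩
  intro hbind
  -- find nonzero v with vecMul v J = 0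
  have : ∃ v : Fin s → ℝ, v ≠ 0 ∧ Matrix.vecMul v J = 0 := by
    by_contra h
    push_neg at h
    have hinj : Function.Injective (Matrix.vecMulLinear J) := by
      rw [← LinearMap.ker_eq_bot, Submodule.eq_bot_iff]
      intro v hvk
      by_contra hv0
      exact h v hv0 hvk
    have hle := LinearMap.finrank_le_finrank_of_injective hinj
    simp only [Module.finrank_pi, Fintype.card_fin] at hle
    omega
  obtain ⟨v, hv0, hvJ⟩ := this
  obtain ⟨w, hw⟩ := hbind 0 (aux16_zero n s J) v hv0
  exact hw (key v hvJ 0 (aux16_zero n s J) w)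
end
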